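/- arXiv:1505.03604 — 4 statements merged into one kernel-verified Lean document; each statement's English description precedes it below -/
import Mathlib

section
/- Let H be a real Hilbert space and D a dictionary in H. There is an absolute constant c > 0 such that for every f ∈ A_1(D) and every m ≥ 1, the best m-term approximation error satisfies σ_m(f, D) := inf_{g ∈ Σ_m(D)} ‖f − g‖ ≤ c · |f|_{A_1(D)} · m^{−1/2}. -/
open scoped BigOperators

universe u

/-- A dictionary in a normed space: a set of norm-one elements with dense linear span. -/
def IsDictionary (H : Type u) [NormedAddCommGroup H] [NormedSpace ℝ H] (D : Set H) : Prop :=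
  (∀ φ ∈ D, ‖φ‖ = 1) ∧ Dense (Submodule.span ℝ D : Set H)

/-- Finite linear combinations of dictionary elements with coefficients of total
absolute sum at most `M`. -/
def A1Pre (H : Type u) [NormedAddCommGroup H] [NormedSpace ℝ H] (D : Set H) (M : ℝ) : Set H :=
  {g | ∃ (n : ℕ) (c : Fin n → ℝ) (φ : Fin n → H),
    (∀ i, φ i ∈ D) ∧ (∑ i, |c i|) ≤ M ∧ g = ∑ i, c i • φ i}

/-- The class `A₁(D, M)`: the closure of `A1Pre`. -/
def A1 (H : Type u) [NormedAddCommGroup H] [NormedSpace ℝ H] (D : Set H) (M : ℝ) : Set H :=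
  closure (A1Pre H D M)

/-- The class `A₁(D)`: the union of the classes `A₁(D, M)` over all `M > 0`. -/
def A1Class (H : Type u) [NormedAddCommGroup H] [NormedSpace ℝ H] (D : Set H) : Set H :=
  ⋃ M ∈ Set.Ioi (0 : ℝ), A1 H D M

/-- The "semi-norm" `|f|_{A₁(D)} = inf {M : f ∈ A₁(D, M)}`. -/
noncomputable def A1Norm (H : Type u) [NormedAddCommGroup H] [NormedSpace ℝ H]
    (D : Set H) (f : H) : ℝ :=
  sInf {M : ℝ | 0 < M ∧ f ∈ A1 H D M}

/-- The set `Σ_m(D)` of `m`-sparse elements with respect to the dictionary `D`. -/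
def SigmaSparse (H : Type u) [NormedAddCommGroup H] [NormedSpace ℝ H]
    (D : Set H) (m : ℕ) : Set H :=
  {g | ∃ (n : ℕ) (c : Fin n → ℝ) (φ : Fin n → H),
    n ≤ m ∧ (∀ i, φ i ∈ D) ∧ g = ∑ i, c i • φ i}

/-! Maurey's empirical approximation argument. If `h` lies in the convex hull of a set
`S ⊆ closedBall 0 A`, then for every `v` the linear functional `⟪v, ·⟫` is at least `⟪v, h⟫` at
some `x ∈ S`, whence `‖v - x‖² ≤ ‖v - h‖² + A²`. Choosing `x₁, …, xₘ ∈ S` greedily in this way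
gives `‖m • h - ∑ xⱼ‖² ≤ m A²`, so the average of the `xⱼ` is within `A / √m` of `h`.
Every element of `A1Pre H D M` lies in the convex hull of the `1`-sparse elements of norm at most
`M`, and an average of `m` of those is `m`-sparse; passing to the closure and letting `M`
decrease to `|f|_{A₁(D)}` gives the theorem with `c = 1`. -/

theorem Convex.sum_smul_mem_of_zero_mem {R E ι : Type*} [Field R] [LinearOrder R]
    [IsStrictOrderedRing R] [AddCommGroup E] [Module R E] {s : Set E} (hs : Convex R s)
    (h0 : (0 : E) ∈ s) {t : Finset ι} {w : ι → R} {z : ι → E} (hw₀ : ∀ i ∈ t, 0 ≤ w i)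
    (hw₁ : ∑ i ∈ t, w i ≤ 1) (hz : ∀ i ∈ t, z i ∈ s) : ∑ i ∈ t, w i • z i ∈ s := by
  rcases (Finset.sum_nonneg hw₀).eq_or_lt with hw | hw
  · rw [Finset.sum_eq_zero fun i hi => by
      rw [(Finset.sum_eq_zero_iff_of_nonneg hw₀).mp hw.symm i hi, zero_smul]]
    exact h0
  · have := hs.smul_mem_of_zero_mem h0 (hs.centerMass_mem hw₀ hw hz) ⟨hw.le, hw₁⟩
    rwa [Finset.centerMass, smul_smul, mul_inv_cancel₀ hw.ne', one_smul] at this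

section Maurey

variable {H : Type*} [NormedAddCommGroup H] [InnerProductSpace ℝ H] {S : Set H} {A : ℝ} {h : H}

theorem exists_mem_norm_sub_sq_le (hS : ∀ x ∈ S, ‖x‖ ≤ A) (hh : h ∈ convexHull ℝ S) (v : H) :
    ∃ x ∈ S, ‖v - x‖ ^ 2 ≤ ‖v - h‖ ^ 2 + A ^ 2 := by
  obtain ⟨x, hxS, hx⟩ := ((innerₛₗ ℝ v).convexOn (convex_convexHull ℝ S)).exists_ge_of_mem_convexHull
    (subset_convexHull ℝ S) hh
  refine ⟨x, hxS, ?_⟩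
  have hxA : ‖x‖ ^ 2 ≤ A ^ 2 := pow_le_pow_left₀ (norm_nonneg x) (hS x hxS) 2
  simp only [innerₛₗ_apply_apply] at hx
  rw [norm_sub_sq_real, norm_sub_sq_real]
  nlinarith [sq_nonneg ‖h‖]

theorem exists_norm_nsmul_sub_sum_sq_le (hS : ∀ x ∈ S, ‖x‖ ≤ A) (hh : h ∈ convexHull ℝ S) :
    ∀ m : ℕ, ∃ x : Fin m → H, (∀ j, x j ∈ S) ∧ ‖(m : ℝ) • h - ∑ j, x j‖ ^ 2 ≤ m * A ^ 2
  | 0 => ⟨Fin.elim0, fun j => j.elim0, by simp⟩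
  | m + 1 => by
    obtain ⟨x, hxS, hx⟩ := exists_norm_nsmul_sub_sum_sq_le hS hh m
    obtain ⟨y, hyS, hy⟩ := exists_mem_norm_sub_sq_le hS hh ((m : ℝ) • h - ∑ j, x j + h)
    refine ⟨Fin.snoc x y, Fin.lastCases (by simpa using hyS) (by simpa using hxS), ?_⟩
    have hsplit : ((m + 1 : ℕ) : ℝ) • h - ∑ j, (Fin.snoc x y : Fin (m + 1) → H) j
        = (m : ℝ) • h - ∑ j, x j + h - y := by
      rw [Fin.sum_univ_castSucc]
      simp only [Fin.snoc_castSucc, Fin.snoc_last, Nat.cast_succ, add_smul, one_smul]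
      abel
    rw [add_sub_cancel_right] at hy
    rw [hsplit, Nat.cast_succ]
    linarith

theorem exists_norm_sub_average_le (hS : ∀ x ∈ S, ‖x‖ ≤ A) (hh : h ∈ convexHull ℝ S)
    {m : ℕ} (hm : 0 < m) :
    ∃ x : Fin m → H, (∀ j, x j ∈ S) ∧ ‖h - (m : ℝ)⁻¹ • ∑ j, x j‖ ≤ A / √m := by
  obtain ⟨x, hxS, hx⟩ := exists_norm_nsmul_sub_sum_sq_le hS hh m
  refine ⟨x, hxS, ?_⟩
  obtain ⟨y, hy⟩ := convexHull_nonempty_iff.mp ⟨h, hh⟩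
  have hA : 0 ≤ A := (norm_nonneg y).trans (hS y hy)
  have hm' : (0 : ℝ) < m := Nat.cast_pos.mpr hm
  have hnorm : ‖(m : ℝ) • h - ∑ j, x j‖ ≤ √m * A := by
    rw [← Real.sqrt_sq hA, ← Real.sqrt_mul hm'.le, ← Real.sqrt_sq (norm_nonneg _)]
    exact Real.sqrt_le_sqrt hx
  calc ‖h - (m : ℝ)⁻¹ • ∑ j, x j‖ = (m : ℝ)⁻¹ * ‖(m : ℝ) • h - ∑ j, x j‖ := by
        rw [← norm_smul_of_nonneg (inv_nonneg.mpr hm'.le), smul_sub, inv_smul_smul₀ hm'.ne']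
    _ ≤ (m : ℝ)⁻¹ * (√m * A) := by gcongr
    _ = A / √m := by
        have hsqrt : 0 < √(m : ℝ) := Real.sqrt_pos.mpr hm'
        field_simp
        rw [Real.sq_sqrt hm'.le]

end Maurey

noncomputable def bestMTermError (H : Type u) [NormedAddCommGroup H] [NormedSpace ℝ H]
    (D : Set H) (m : ℕ) (f : H) : ℝ :=
  sInf {e : ℝ | ∃ g ∈ SigmaSparse H D m, e = ‖f - g‖}

section Sparse

variable {H : Type u} [NormedAddCommGroup H] [NormedSpace ℝ H] {D : Set H}

theorem zero_mem_sigmaSparse (m : ℕ) : (0 : H) ∈ SigmaSparse H D m :=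
  ⟨0, Fin.elim0, Fin.elim0, m.zero_le, fun i => i.elim0, by simp⟩

theorem smul_mem_sigmaSparse {m : ℕ} {g : H} (a : ℝ) (hg : g ∈ SigmaSparse H D m) :
    a • g ∈ SigmaSparse H D m := by
  obtain ⟨n, c, φ, hn, hφ, rfl⟩ := hg
  exact ⟨n, fun i => a * c i, φ, hn, hφ, by simp only [Finset.smul_sum, smul_smul]⟩

theorem add_mem_sigmaSparse {m k : ℕ} {g g' : H} (hg : g ∈ SigmaSparse H D m)
    (hg' : g' ∈ SigmaSparse H D k) : g + g' ∈ SigmaSparse H D (m + k) := by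
  obtain ⟨n, c, φ, hn, hφ, rfl⟩ := hg
  obtain ⟨n', c', φ', hn', hφ', rfl⟩ := hg'
  refine ⟨n + n', Fin.append c c', Fin.append φ φ', by omega,
    Fin.addCases (by simpa using hφ) (by simpa using hφ'), ?_⟩
  simp [Fin.sum_univ_add]

theorem sum_mem_sigmaSparse {k : ℕ} :
    ∀ {m : ℕ} {x : Fin m → H}, (∀ j, x j ∈ SigmaSparse H D k) →
      ∑ j, x j ∈ SigmaSparse H D (m * k)
  | 0, _, _ => by simpa using zero_mem_sigmaSparse 0
  | m + 1, x, hx => by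
    rw [Fin.sum_univ_castSucc, Nat.succ_mul]
    exact add_mem_sigmaSparse (sum_mem_sigmaSparse fun j => hx _) (hx _)

theorem A1Pre_subset_convexHull (hD : ∀ φ ∈ D, ‖φ‖ ≤ 1) {M : ℝ} (hM : 0 < M) :
    A1Pre H D M ⊆ convexHull ℝ (SigmaSparse H D 1 ∩ Metric.closedBall 0 M) := by
  rintro _ ⟨n, c, φ, hφ, hc, rfl⟩
  have hterm : ∀ i, c i • φ i = (|c i| / M) • ((M * SignType.sign (c i)) • φ i) := by
    intro i
    rw [smul_smul]
    congr 1
    field_simp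
    exact (abs_mul_sign _).symm
  simp_rw [hterm]
  refine (convex_convexHull ℝ _).sum_smul_mem_of_zero_mem
    (subset_convexHull ℝ _ (Set.mem_inter (zero_mem_sigmaSparse 1) (by simpa using hM.le)))
    (fun i _ => by positivity) (by rw [← Finset.sum_div]; exact div_le_one_of_le₀ hc hM.le)
    fun i _ => subset_convexHull ℝ _ (Set.mem_inter ?_ ?_)
  · exact smul_mem_sigmaSparse _ ⟨1, 1, fun _ => φ i, le_rfl, fun _ => hφ i, by simp⟩
  · have hsign : |(SignType.sign (c i) : ℝ)| ≤ 1 := by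
      rcases lt_trichotomy (c i) 0 with h | h | h <;> simp [h]
    rw [mem_closedBall_zero_iff, norm_smul, Real.norm_eq_abs, abs_mul, abs_of_pos hM]
    calc M * |(SignType.sign (c i) : ℝ)| * ‖φ i‖ ≤ M * 1 * 1 := by
          gcongr
          exact hD _ (hφ i)
      _ = M := by ring

theorem bestMTermError_le_of_forall_pos {m : ℕ} {f : H} {B : ℝ}
    (h : ∀ ε > 0, ∃ g ∈ SigmaSparse H D m, ‖f - g‖ ≤ B + ε) : bestMTermError H D m f ≤ B :=
  le_of_forall_pos_le_add fun ε hε => by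
    obtain ⟨g, hg, hfg⟩ := h ε hε
    have hbdd : BddBelow {e : ℝ | ∃ g ∈ SigmaSparse H D m, e = ‖f - g‖} :=
      ⟨0, by rintro _ ⟨g, -, rfl⟩; positivity⟩
    exact (csInf_le hbdd ⟨g, hg, rfl⟩).trans hfg

end Sparse

section BestMTerm

variable {H : Type u} [NormedAddCommGroup H] [InnerProductSpace ℝ H] {D : Set H} {m : ℕ}
  {M : ℝ} {f : H}

theorem exists_mem_sigmaSparse_norm_sub_le (hD : ∀ φ ∈ D, ‖φ‖ ≤ 1) (hM : 0 < M) {g : H}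
    (hg : g ∈ A1Pre H D M) (hm : 0 < m) : ∃ g' ∈ SigmaSparse H D m, ‖g - g'‖ ≤ M / √m := by
  obtain ⟨x, hxS, hx⟩ := exists_norm_sub_average_le
    (fun y hy => mem_closedBall_zero_iff.mp hy.2) (A1Pre_subset_convexHull hD hM hg) hm
  refine ⟨_, ?_, hx⟩
  simpa using smul_mem_sigmaSparse (m : ℝ)⁻¹ (sum_mem_sigmaSparse fun j => (hxS j).1)

theorem bestMTermError_le_of_mem_A1 (hD : ∀ φ ∈ D, ‖φ‖ ≤ 1) (hM : 0 < M) (hf : f ∈ A1 H D M)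
    (hm : 0 < m) : bestMTermError H D m f ≤ M / √m :=
  bestMTermError_le_of_forall_pos fun ε hε => by
    obtain ⟨g, hg, hfg⟩ := Metric.mem_closure_iff.mp hf ε hε
    obtain ⟨g', hg', hgg'⟩ := exists_mem_sigmaSparse_norm_sub_le hD hM hg hm
    refine ⟨g', hg', ?_⟩
    calc ‖f - g'‖ ≤ ‖f - g‖ + ‖g - g'‖ := norm_sub_le_norm_sub_add_norm_sub _ _ _
      _ ≤ M / √m + ε := by rw [← dist_eq_norm]; linarith

end BestMTerm

/-- There is an absolute constant `c > 0` such that for every real Hilbert space `H`,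
every dictionary `D` in `H`, every `f ∈ A₁(D)` and every `m ≥ 1`,
`σ_m(f, D) ≤ c · |f|_{A₁(D)} · m^{-1/2}`. -/
theorem best_m_term_rate_on_A1 :
    ∃ c : ℝ, 0 < c ∧
      ∀ (H : Type u) [NormedAddCommGroup H] [InnerProductSpace ℝ H] [CompleteSpace H]
        (D : Set H), IsDictionary H D →
        ∀ f ∈ A1Class H D, ∀ m : ℕ, 1 ≤ m →
          sInf {e : ℝ | ∃ g ∈ SigmaSparse H D m, e = ‖f - g‖} ≤
            c * A1Norm H D f * (m : ℝ) ^ (-(1 : ℝ) / 2) := by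
  refine ⟨1, one_pos, fun H _ _ _ D hD f hf m hm => ?_⟩
  have hm' : 0 < √(m : ℝ) := Real.sqrt_pos.mpr (by exact_mod_cast hm)
  have hnonempty : {M : ℝ | 0 < M ∧ f ∈ A1 H D M}.Nonempty := by
    simpa [A1Class, Set.Nonempty] using hf
  have hscaled : bestMTermError H D m f * √m ≤ A1Norm H D f :=
    le_csInf hnonempty fun M ⟨hM, hfM⟩ =>
      (le_div_iff₀ hm').mp (bestMTermError_le_of_mem_A1 (fun φ hφ => (hD.1 φ hφ).le) hM hfM hm)
  rw [one_mul, neg_div, Real.rpow_neg (Nat.cast_nonneg m), ← Real.sqrt_eq_rpow, ← div_eq_mul_inv]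
  exact (le_div_iff₀ hm').mpr hscaled
end

section
/- Let ℓ > 0, r > 0, B > 0, and let {a_m}_{m=1}^∞ and {r_m}_{m=2}^∞ be sequences of non-negative real numbers satisfying a_1 ≤ B and a_{m+1} ≤ a_m (1 − (r_{m+1}/r) a_m^ℓ) for all m = 1, 2, .... Then for every m ≥ 2, a_m ≤ max{1, ℓ^{−1/ℓ}} · r^{1/ℓ} · ( r B^{−ℓ} + ∑_{k=2}^m r_k )^{−1/ℓ}. -/
/-!
Put `S_m = r B^{-ℓ} + ∑_{k=2}^m r_k` and `M = max {1, ℓ⁻¹}`. The quantity `a_m^ℓ S_m` stays below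
`M r` for all `m ≥ 1`: it starts at most `B^ℓ · r B^{-ℓ} = r`, and with `t = (r_{m+1}/r) a_m^ℓ`
one step multiplies `a_m^ℓ` by at most `(1 - t)^ℓ ≤ 1 / (1 + ℓ t)`, whence
`a_{m+1}^ℓ S_{m+1} ≤ (a_m^ℓ S_m + r t) / (1 + ℓ t) ≤ (M r + M ℓ r t) / (1 + ℓ t) = M r`.
Solving `a_m^ℓ S_m ≤ M r` for `a_m` gives the bound, since `M^{1/ℓ} = max {1, ℓ^{-1/ℓ}}`.
-/

open Finset Real

lemma one_sub_rpow_mul_one_add_mul_le_one {ℓ t : ℝ} (hℓ : 0 ≤ ℓ) (ht₀ : 0 ≤ t) (ht₁ : t ≤ 1) :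
    (1 - t) ^ ℓ * (1 + ℓ * t) ≤ 1 :=
  calc (1 - t) ^ ℓ * (1 + ℓ * t) ≤ exp (-t) ^ ℓ * exp (ℓ * t) := by
        gcongr
        · exact one_sub_le_exp_neg t
        · linarith [add_one_le_exp (ℓ * t)]
    _ = 1 := by rw [← exp_mul, ← exp_add]; ring_nf; exact exp_zero

lemma rpow_mul_add_le_of_le_mul_one_sub {ℓ r M x y ρ S : ℝ} (hℓ : 0 < ℓ) (hr : 0 < r)
    (hMℓ : 1 ≤ M * ℓ) (hx : 0 ≤ x) (hy : 0 ≤ y) (hρ : 0 ≤ ρ) (hS : 0 ≤ S)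
    (hxS : x ^ ℓ * S ≤ M * r) (hyx : y ≤ x * (1 - ρ / r * x ^ ℓ)) :
    y ^ ℓ * (S + ρ) ≤ M * r := by
  have hM : 0 < M := pos_of_mul_pos_left (one_pos.trans_le hMℓ) hℓ.le
  set t := ρ / r * x ^ ℓ with ht
  have ht₀ : 0 ≤ t := by positivity
  rcases le_or_gt 1 t with ht₁ | ht₁
  · have hy₀ : y = 0 := le_antisymm (hyx.trans (mul_nonpos_of_nonneg_of_nonpos hx (by linarith))) hy
    rw [hy₀, zero_rpow hℓ.ne', zero_mul]
    positivity
  have hxρ : x ^ ℓ * ρ = r * t := by rw [ht]; field_simp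
  calc y ^ ℓ * (S + ρ) ≤ (x * (1 - t)) ^ ℓ * (S + ρ) := by gcongr
    _ = (1 - t) ^ ℓ * (x ^ ℓ * S + r * t) := by
        rw [mul_rpow hx (by linarith), ← hxρ]; ring
    _ ≤ (1 - t) ^ ℓ * (M * r + M * ℓ * (r * t)) := by
        have h1t : 0 ≤ (1 - t) ^ ℓ := rpow_nonneg (by linarith) ℓ
        exact mul_le_mul_of_nonneg_left
          (add_le_add hxS (le_mul_of_one_le_left (by positivity) hMℓ)) h1t
    _ = (1 - t) ^ ℓ * (1 + ℓ * t) * (M * r) := by ring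
    _ ≤ M * r := mul_le_of_le_one_left (by positivity)
        (one_sub_rpow_mul_one_add_mul_le_one hℓ.le ht₀ ht₁.le)

lemma rpow_mul_sum_Icc_le_of_le_mul_one_sub {ℓ r M S₀ : ℝ} {a ρ : ℕ → ℝ} (hℓ : 0 < ℓ)
    (hr : 0 < r) (hMℓ : 1 ≤ M * ℓ) (hS₀ : 0 ≤ S₀) (ha : ∀ m, 1 ≤ m → 0 ≤ a m)
    (hρ : ∀ m, 2 ≤ m → 0 ≤ ρ m) (ha₁ : a 1 ^ ℓ * S₀ ≤ M * r)
    (hrec : ∀ m, 1 ≤ m → a (m + 1) ≤ a m * (1 - ρ (m + 1) / r * a m ^ ℓ)) :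
    ∀ m, 1 ≤ m → a m ^ ℓ * (S₀ + ∑ k ∈ Icc 2 m, ρ k) ≤ M * r := by
  intro m hm
  induction m, hm using Nat.le_induction with
  | base => simpa using ha₁
  | succ m hm ih =>
    rw [sum_Icc_succ_top (by omega), ← add_assoc]
    have hsum : 0 ≤ ∑ k ∈ Icc 2 m, ρ k := sum_nonneg fun k hk ↦ hρ k (mem_Icc.mp hk).1
    exact rpow_mul_add_le_of_le_mul_one_sub hℓ hr hMℓ (ha m hm) (ha (m + 1) (by omega))
      (hρ (m + 1) (by omega)) (by positivity) ih (hrec m hm)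

lemma le_rpow_mul_rpow_of_rpow_mul_le {ℓ x C S : ℝ} (hℓ : 0 < ℓ) (hx : 0 ≤ x) (hC : 0 ≤ C)
    (hS : 0 < S) (h : x ^ ℓ * S ≤ C) :
    x ≤ C ^ ((1 : ℝ) / ℓ) * S ^ (-(1 : ℝ) / ℓ) := by
  have : x ≤ (C / S) ^ ℓ⁻¹ :=
    (le_rpow_inv_iff_of_pos hx (by positivity) hℓ).mpr ((le_div_iff₀ hS).mpr h)
  rwa [div_rpow hC hS.le, div_eq_mul_inv, ← rpow_neg hS.le, ← one_div, ← neg_div] at this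

lemma max_one_inv_rpow_one_div {ℓ : ℝ} (hℓ : 0 < ℓ) :
    max 1 ℓ⁻¹ ^ ((1 : ℝ) / ℓ) = max 1 (ℓ ^ (-(1 : ℝ) / ℓ)) := by
  rw [rpow_max zero_le_one (by positivity) (by positivity), one_rpow, inv_rpow hℓ.le,
    ← rpow_neg hℓ.le, neg_div]

/-- Let `ℓ > 0`, `r > 0`, `B > 0`, and let `{a_m}_{m≥1}` and `{r_m}_{m≥2}` be sequences of
non-negative numbers with `a₁ ≤ B` and `a_{m+1} ≤ a_m (1 − (r_{m+1}/r) a_m^ℓ)` for all `m ≥ 1`.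
Then for every `m ≥ 2`,
`a_m ≤ max{1, ℓ^{−1/ℓ}} · r^{1/ℓ} · (r B^{−ℓ} + ∑_{k=2}^m r_k)^{−1/ℓ}`. -/
theorem recursive_sequence_decay (ℓ r B : ℝ) (hℓ : 0 < ℓ) (hr : 0 < r) (hB : 0 < B)
    (a rs : ℕ → ℝ)
    (ha_nonneg : ∀ m : ℕ, 1 ≤ m → 0 ≤ a m)
    (hrs_nonneg : ∀ m : ℕ, 2 ≤ m → 0 ≤ rs m)
    (ha1 : a 1 ≤ B)
    (hrec : ∀ m : ℕ, 1 ≤ m → a (m + 1) ≤ a m * (1 - rs (m + 1) / r * a m ^ ℓ)) :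
    ∀ m : ℕ, 2 ≤ m →
      a m ≤ max 1 (ℓ ^ (-(1 : ℝ) / ℓ)) * r ^ ((1 : ℝ) / ℓ) *
        (r * B ^ (-ℓ) + ∑ k ∈ Finset.Icc 2 m, rs k) ^ (-(1 : ℝ) / ℓ) := by
  intro m hm
  set M := max 1 ℓ⁻¹
  have hM₁ : 1 ≤ M := le_max_left _ _
  have hMℓ : 1 ≤ M * ℓ :=
    (inv_mul_cancel₀ hℓ.ne').symm.le.trans (mul_le_mul_of_nonneg_right (le_max_right _ _) hℓ.le)
  have ha₁ : a 1 ^ ℓ * (r * B ^ (-ℓ)) ≤ M * r :=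
    calc a 1 ^ ℓ * (r * B ^ (-ℓ)) ≤ B ^ ℓ * B ^ (-ℓ) * r := by
          rw [mul_comm r, ← mul_assoc]; gcongr; exact ha_nonneg 1 le_rfl
      _ = r := by rw [← rpow_add hB, add_neg_cancel, rpow_zero, one_mul]
      _ ≤ M * r := le_mul_of_one_le_left hr.le hM₁
  have hS : 0 < r * B ^ (-ℓ) + ∑ k ∈ Icc 2 m, rs k := by
    have : 0 ≤ ∑ k ∈ Icc 2 m, rs k := sum_nonneg fun k hk ↦ hrs_nonneg k (mem_Icc.mp hk).1
    positivity
  have key := rpow_mul_sum_Icc_le_of_le_mul_one_sub hℓ hr hMℓ (by positivity) ha_nonneg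
    hrs_nonneg ha₁ hrec m (by omega)
  calc a m ≤ (M * r) ^ ((1 : ℝ) / ℓ) * (r * B ^ (-ℓ) + ∑ k ∈ Icc 2 m, rs k) ^ (-(1 : ℝ) / ℓ) :=
        le_rpow_mul_rpow_of_rpow_mul_le hℓ (ha_nonneg m (by omega)) (by positivity) hS key
    _ = _ := by rw [mul_rpow (by positivity) hr.le, max_one_inv_rpow_one_div hℓ]
end

section
/- Let X be a real Banach space whose modulus of smoothness satisfies ρ(u) ≤ γ u^q for all u > 0, where 1 < q ≤ 2 and γ > 0 is a constant. Let g ∈ X, g ≠ 0, and let F_g ∈ X* be a norming functional of g (i.e., ‖F_g‖ = 1 and F_g(g) = ‖g‖). Then for every h ∈ X and every u > 0, ‖g + u h‖ ≤ ‖g‖ + u F_g(h) + 2 γ u^q ‖g‖^{1−q} ‖h‖^q. -/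
/-- The modulus of smoothness of a real normed space `X`:
`ρ(u) = sup{(‖f + u g‖ + ‖f − u g‖)/2 − 1 : ‖f‖ = ‖g‖ = 1}`. -/
noncomputable def modulusOfSmoothness (X : Type*) [NormedAddCommGroup X] [NormedSpace ℝ X]
    (u : ℝ) : ℝ :=
  sSup {x : ℝ | ∃ f g : X, ‖f‖ = 1 ∧ ‖g‖ = 1 ∧ x = (‖f + u • g‖ + ‖f - u • g‖) / 2 - 1}

/-!
If `F` norms the unit vector `f`, then `‖f - v‖ ≥ F (f - v) = 1 - F v`, so the excess of
`‖f + v‖` over `1 + F v` is at most the excess of `‖f + v‖ + ‖f - v‖` over `2`, which the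
modulus of smoothness controls. Rescaling `g` and `h` to unit vectors turns `ρ(u ‖h‖ / ‖g‖)`
into the factor `u ^ q ‖g‖ ^ (-q) ‖h‖ ^ q` of the power bound.
-/

section NormingFunctional

variable {X : Type*} [NormedAddCommGroup X] [NormedSpace ℝ X]

theorem le_modulusOfSmoothness {f g : X} (hf : ‖f‖ = 1) (hg : ‖g‖ = 1) (u : ℝ) :
    (‖f + u • g‖ + ‖f - u • g‖) / 2 - 1 ≤ modulusOfSmoothness X u := by
  refine le_csSup ⟨|u|, ?_⟩ ⟨f, g, hf, hg, rfl⟩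
  rintro x ⟨a, b, ha, hb, rfl⟩
  have hadd := norm_add_le a (u • b)
  have hsub := norm_sub_le a (u • b)
  rw [norm_smul, ha, hb, Real.norm_eq_abs, mul_one] at hadd hsub
  linarith

theorem norm_add_smul_le_of_norming_unit {F : X →L[ℝ] ℝ} (hF : ‖F‖ ≤ 1) {f k : X}
    (hf : ‖f‖ = 1) (hk : ‖k‖ = 1) (hFf : F f = 1) (t : ℝ) :
    ‖f + t • k‖ ≤ 1 + t * F k + 2 * modulusOfSmoothness X t := by
  have hρ := le_modulusOfSmoothness hf hk t
  have hFsub : F (f - t • k) ≤ ‖f - t • k‖ :=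
    (Real.le_norm_self _).trans (F.le_of_opNorm_le hF _ |>.trans_eq (one_mul _))
  rw [map_sub, map_smul, hFf, smul_eq_mul] at hFsub
  linarith

theorem norm_add_smul_le_of_norming {F : X →L[ℝ] ℝ} (hF : ‖F‖ ≤ 1) {g h : X} (hg : g ≠ 0)
    (hh : h ≠ 0) (hFg : F g = ‖g‖) (u : ℝ) :
    ‖g + u • h‖ ≤ ‖g‖ + u * F h + 2 * ‖g‖ * modulusOfSmoothness X (u * ‖h‖ / ‖g‖) := by
  have hgn : 0 < ‖g‖ := norm_pos_iff.2 hg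
  have hhn : 0 < ‖h‖ := norm_pos_iff.2 hh
  set t := u * ‖h‖ / ‖g‖ with ht
  have hunit_norm {x : X} (hx : 0 < ‖x‖) : ‖‖x‖⁻¹ • x‖ = 1 := by
    rw [norm_smul, norm_inv, norm_norm, inv_mul_cancel₀ hx.ne']
  have hFf : F (‖g‖⁻¹ • g) = 1 := by rw [map_smul, hFg, smul_eq_mul, inv_mul_cancel₀ hgn.ne']
  have hunit := norm_add_smul_le_of_norming_unit hF (hunit_norm hgn) (hunit_norm hhn) hFf t
  have hscale : g + u • h = ‖g‖ • (‖g‖⁻¹ • g + t • ‖h‖⁻¹ • h) := by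
    rw [smul_add, smul_inv_smul₀ hgn.ne', smul_smul, smul_smul]
    congr 2
    rw [ht]
    field_simp
  calc ‖g + u • h‖ = ‖g‖ * ‖‖g‖⁻¹ • g + t • ‖h‖⁻¹ • h‖ := by
        rw [hscale, norm_smul, norm_norm]
    _ ≤ ‖g‖ * (1 + t * F (‖h‖⁻¹ • h) + 2 * modulusOfSmoothness X t) := by gcongr
    _ = ‖g‖ + u * F h + 2 * ‖g‖ * modulusOfSmoothness X t := by
        rw [map_smul, smul_eq_mul, ht]
        field_simp

end NormingFunctional

theorem smoothness_norming_functional_bound_general {X : Type*} [NormedAddCommGroup X]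
    [NormedSpace ℝ X]
    (γ q : ℝ) (hq1 : 1 < q)
    (hρ : ∀ u : ℝ, 0 < u → modulusOfSmoothness X u ≤ γ * u ^ q)
    (g : X) (hg : g ≠ 0)
    (Fg : X →L[ℝ] ℝ) (hFg_norm : ‖Fg‖ = 1) (hFg : Fg g = ‖g‖) :
    ∀ h : X, ∀ u : ℝ, 0 < u →
      ‖g + u • h‖ ≤ ‖g‖ + u * Fg h + 2 * γ * u ^ q * ‖g‖ ^ (1 - q) * ‖h‖ ^ q := by
  intro h u hu
  rcases eq_or_ne h 0 with rfl | hh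
  · simp [Real.zero_rpow (by linarith : q ≠ 0)]
  have hgn : 0 < ‖g‖ := norm_pos_iff.2 hg
  have hhn : 0 < ‖h‖ := norm_pos_iff.2 hh
  have hpow : ‖g‖ * (u * ‖h‖ / ‖g‖) ^ q = u ^ q * ‖g‖ ^ (1 - q) * ‖h‖ ^ q := by
    rw [Real.div_rpow (by positivity) hgn.le, Real.mul_rpow hu.le hhn.le,
      Real.rpow_sub hgn, Real.rpow_one]
    field_simp
  calc ‖g + u • h‖
      ≤ ‖g‖ + u * Fg h + 2 * ‖g‖ * modulusOfSmoothness X (u * ‖h‖ / ‖g‖) :=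
        norm_add_smul_le_of_norming hFg_norm.le hg hh hFg u
    _ ≤ ‖g‖ + u * Fg h + 2 * ‖g‖ * (γ * (u * ‖h‖ / ‖g‖) ^ q) := by
        gcongr
        exact hρ _ (by positivity)
    _ = ‖g‖ + u * Fg h + 2 * γ * u ^ q * ‖g‖ ^ (1 - q) * ‖h‖ ^ q := by
        linear_combination 2 * γ * hpow

/-- Let `X` be a real Banach space with `ρ(u) ≤ γ u^q` for all `u > 0`, `1 < q ≤ 2`, `γ > 0`.
If `g ≠ 0` and `F_g` is a norming functional of `g`, then for every `h ∈ X` and `u > 0`,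
`‖g + u h‖ ≤ ‖g‖ + u F_g(h) + 2 γ u^q ‖g‖^{1−q} ‖h‖^q`. -/
theorem smoothness_norming_functional_bound {X : Type*} [NormedAddCommGroup X]
    [NormedSpace ℝ X] [CompleteSpace X]
    (γ q : ℝ) (hq1 : 1 < q) (hq2 : q ≤ 2) (hγ : 0 < γ)
    (hρ : ∀ u : ℝ, 0 < u → modulusOfSmoothness X u ≤ γ * u ^ q)
    (g : X) (hg : g ≠ 0)
    (Fg : X →L[ℝ] ℝ) (hFg_norm : ‖Fg‖ = 1) (hFg : Fg g = ‖g‖) :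
    ∀ h : X, ∀ u : ℝ, 0 < u →
      ‖g + u • h‖ ≤ ‖g‖ + u * Fg h + 2 * γ * u ^ q * ‖g‖ ^ (1 - q) * ‖h‖ ^ q :=
  smoothness_norming_functional_bound_general γ q hq1 hρ g hg Fg hFg_norm hFg
end

section
/- Let X be a real Banach space whose modulus of smoothness satisfies ρ(u) ≤ γ u^q for all u > 0, where 1 < q ≤ 2 and γ > 0 is a constant. Let g ∈ X, g ≠ 0, with norming functional F_g, and let φ ∈ X with ‖φ‖ = 1 and F_g(φ) ≠ 0. Set λ := sign(F_g(φ)) · ‖g‖ · (2γq)^{1/(1−q)} · |F_g(φ)|^{1/(q−1)}. Then ‖g − λ φ‖ ≤ ‖g‖ · ( 1 − ((q−1)/q) (2γq)^{1/(1−q)} |F_g(φ)|^{q/(q−1)} ). -/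
/-!
Let `u = |λ| / ‖g‖`. The smoothness bound gives
`‖g + λφ‖ + ‖g − λφ‖ ≤ 2‖g‖ (1 + γ u^q)`, and the norming functional gives
`‖g + λφ‖ ≥ F_g(g + λφ) = ‖g‖ + λ F_g(φ)`, so
`‖g − λφ‖ ≤ ‖g‖ (1 + 2γ u^q − u |F_g(φ)|)`.
The prescribed `λ` is the minimiser of the right-hand side, i.e. `2γq u^{q−1} = |F_g(φ)|`,
at which `2γ u^q = u |F_g(φ)| / q`.
-/

namespace Real

theorem sign_mul_self (x : ℝ) : sign x * x = |x| := by
  rcases lt_trichotomy x 0 with hx | rfl | hx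
  · rw [sign_of_neg hx, abs_of_neg hx]; ring
  · simp
  · rw [sign_of_pos hx, abs_of_pos hx, one_mul]

theorem abs_sign_mul_rpow_abs (x : ℝ) {p : ℝ} (hp : p ≠ 0) : |sign x| * |x| ^ p = |x| ^ p := by
  rcases eq_or_ne x 0 with rfl | hx
  · simp [zero_rpow hp]
  · rcases sign_apply_eq_of_ne_zero x hx with h | h <;> simp [h]

theorem rpow_one_div_sub_one_mul_self {B q : ℝ} (hB : 0 ≤ B) (hq : 1 < q) :
    B ^ (1 / (q - 1)) * B = B ^ (q / (q - 1)) := by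
  have hexp : 1 / (q - 1) + 1 = q / (q - 1) := by
    field_simp [(by linarith : q - 1 ≠ 0)]
    ring
  rw [← rpow_add_one' hB (hexp ▸ div_ne_zero (by linarith) (by linarith)), hexp]

theorem mul_rpow_one_div_one_sub_rpow {c q : ℝ} (hc : 0 < c) (hq : q ≠ 1) :
    c * (c ^ (1 / (1 - q))) ^ q = c ^ (1 / (1 - q)) := by
  have hq' : 1 - q ≠ 0 := sub_ne_zero.mpr hq.symm
  have hexp : 1 + 1 / (1 - q) * q = 1 / (1 - q) := by
    field_simp
    ring
  rw [← rpow_mul hc.le, ← rpow_one_add' hc.le (by rw [hexp]; exact one_div_ne_zero hq'), hexp]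

/-- `u = c^{1/(1-q)} B^{1/(q-1)}` is the critical point of `u ↦ c u^q / q − u B`. -/
theorem mul_rpow_eq_of_critical {c B q : ℝ} (hc : 0 < c) (hB : 0 ≤ B) (hq : 1 < q) :
    c * (c ^ (1 / (1 - q)) * B ^ (1 / (q - 1))) ^ q =
      c ^ (1 / (1 - q)) * B ^ (1 / (q - 1)) * B := by
  rw [mul_rpow (rpow_nonneg hc.le _) (rpow_nonneg hB _), ← rpow_mul hB,
    ← mul_assoc, mul_rpow_one_div_one_sub_rpow hc hq.ne', mul_assoc,
    rpow_one_div_sub_one_mul_self hB hq]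
  congr 2
  field_simp

end Real

section Smoothness

variable {X : Type*} [NormedAddCommGroup X] [NormedSpace ℝ X]

theorem norm_add_add_norm_sub_le_modulusOfSmoothness {f h : X} (hf : ‖f‖ = 1) (hh : ‖h‖ = 1)
    (u : ℝ) : ‖f + u • h‖ + ‖f - u • h‖ ≤ 2 + 2 * modulusOfSmoothness X u := by
  have hbdd : BddAbove {x : ℝ | ∃ f g : X, ‖f‖ = 1 ∧ ‖g‖ = 1 ∧
      x = (‖f + u • g‖ + ‖f - u • g‖) / 2 - 1} := by
    refine ⟨|u|, ?_⟩
    rintro _ ⟨f', g', hf', hg', rfl⟩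
    have hplus := norm_add_le f' (u • g')
    have hminus := norm_sub_le f' (u • g')
    rw [norm_smul, hf', hg', Real.norm_eq_abs, mul_one] at hplus hminus
    linarith
  have := le_csSup hbdd ⟨f, h, hf, hh, rfl⟩
  rw [modulusOfSmoothness]
  linarith

theorem norm_add_add_norm_sub_le_modulusOfSmoothness_of_ne_zero {g φ : X} (hg : g ≠ 0)
    (hφ : ‖φ‖ = 1) (s : ℝ) :
    ‖g + s • φ‖ + ‖g - s • φ‖ ≤ 2 * ‖g‖ * (1 + modulusOfSmoothness X (|s| / ‖g‖)) := by
  have hng : 0 < ‖g‖ := norm_pos_iff.mpr hg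
  have hunit : ‖‖g‖⁻¹ • g‖ = 1 := by
    rw [norm_smul, norm_inv, norm_norm, inv_mul_cancel₀ hng.ne']
  have hscale (t : ℝ) : ‖g‖ • (‖g‖⁻¹ • g + (t / ‖g‖) • φ) = g + t • φ := by
    rw [smul_add, smul_smul, smul_smul, mul_inv_cancel₀ hng.ne', one_smul,
      mul_div_cancel₀ _ hng.ne']
  have hsum : ‖g + s • φ‖ + ‖g - s • φ‖ = ‖g + |s| • φ‖ + ‖g + (-|s|) • φ‖ := by
    rcases abs_choice s with h | h <;> rw [h] <;> simp only [neg_smul, neg_neg, sub_eq_add_neg]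
    rw [add_comm]
  have key := norm_add_add_norm_sub_le_modulusOfSmoothness hunit hφ (|s| / ‖g‖)
  rw [hsum, ← hscale, ← hscale, norm_smul, norm_smul, norm_norm, neg_div,
    neg_smul, ← sub_eq_add_neg]
  nlinarith

theorem norm_sub_smul_le_of_modulusOfSmoothness_le {γ q : ℝ} (hq : q ≠ 0)
    (hρ : ∀ u : ℝ, 0 < u → modulusOfSmoothness X u ≤ γ * u ^ q) {g φ : X} (hg : g ≠ 0)
    (hφ : ‖φ‖ = 1) {F : X →L[ℝ] ℝ} (hF : ‖F‖ ≤ 1) (hFg : F g = ‖g‖) (s : ℝ) :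
    ‖g - s • φ‖ ≤ ‖g‖ * (1 + 2 * γ * (|s| / ‖g‖) ^ q) - s * F φ := by
  rcases eq_or_ne s 0 with rfl | hs
  · simp [Real.zero_rpow hq]
  have hng : 0 < ‖g‖ := norm_pos_iff.mpr hg
  have hsmooth := mul_le_mul_of_nonneg_left (hρ (|s| / ‖g‖) (by positivity))
    (by positivity : (0 : ℝ) ≤ 2 * ‖g‖)
  have hsum := norm_add_add_norm_sub_le_modulusOfSmoothness_of_ne_zero hg hφ s
  have hnorming : ‖g‖ + s * F φ ≤ ‖g + s • φ‖ :=
    calc ‖g‖ + s * F φ = F (g + s • φ) := by simp [hFg]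
      _ ≤ ‖F (g + s • φ)‖ := Real.le_norm_self _
      _ ≤ ‖F‖ * ‖g + s • φ‖ := F.le_opNorm _
      _ ≤ ‖g + s • φ‖ := mul_le_of_le_one_left (norm_nonneg _) hF
  linarith

end Smoothness

theorem rpga_banach_step_reduction_general {X : Type*} [NormedAddCommGroup X]
    [NormedSpace ℝ X]
    (γ q : ℝ) (hq1 : 1 < q) (hγ : 0 < γ)
    (hρ : ∀ u : ℝ, 0 < u → modulusOfSmoothness X u ≤ γ * u ^ q)
    (g : X) (hg : g ≠ 0)
    (Fg : X →L[ℝ] ℝ) (hFg_norm : ‖Fg‖ = 1) (hFg : Fg g = ‖g‖)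
    (φ : X) (hφ : ‖φ‖ = 1)
    (lam : ℝ)
    (hlam : lam = Real.sign (Fg φ) * ‖g‖ * (2 * γ * q) ^ ((1 : ℝ) / (1 - q)) *
      |Fg φ| ^ ((1 : ℝ) / (q - 1))) :
    ‖g - lam • φ‖ ≤
      ‖g‖ * (1 - (q - 1) / q * (2 * γ * q) ^ ((1 : ℝ) / (1 - q)) *
        |Fg φ| ^ (q / (q - 1))) := by
  set A := (2 * γ * q) ^ ((1 : ℝ) / (1 - q))
  set B := |Fg φ|
  set u := A * B ^ ((1 : ℝ) / (q - 1)) with hu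
  have hlam_abs : |lam| / ‖g‖ = u := by
    have hA : 0 < A := by positivity
    rw [hlam, abs_mul, abs_mul, abs_mul, abs_norm, abs_of_pos hA,
      abs_of_nonneg (by positivity : 0 ≤ B ^ ((1 : ℝ) / (q - 1)))]
    field_simp
    linear_combination A * Real.abs_sign_mul_rpow_abs (Fg φ) (p := 1 / (q - 1))
      (one_div_ne_zero (by linarith))
  have hlam_mul : lam * Fg φ = ‖g‖ * (u * B) := by
    rw [hlam]
    linear_combination (‖g‖ * A * B ^ ((1 : ℝ) / (q - 1))) * Real.sign_mul_self (Fg φ)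
  have hcrit : 2 * γ * q * u ^ q = u * B :=
    Real.mul_rpow_eq_of_critical (by positivity) (abs_nonneg _) hq1
  calc ‖g - lam • φ‖ ≤ ‖g‖ * (1 + 2 * γ * (|lam| / ‖g‖) ^ q) - lam * Fg φ :=
        norm_sub_smul_le_of_modulusOfSmoothness_le (by linarith) hρ hg hφ hFg_norm.le hFg lam
    _ = ‖g‖ * (1 - (q - 1) / q * (u * B)) := by
        rw [hlam_abs, hlam_mul]
        field_simp
        linear_combination hcrit
    _ = _ := by
        rw [hu, mul_assoc A, Real.rpow_one_div_sub_one_mul_self (abs_nonneg _) hq1]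
        ring

/-- Let `X` be a real Banach space with `ρ(u) ≤ γ u^q` for all `u > 0`, `1 < q ≤ 2`, `γ > 0`.
Let `g ≠ 0` with norming functional `F_g`, and let `φ` with `‖φ‖ = 1` and `F_g(φ) ≠ 0`.
With `λ = sign(F_g(φ)) ‖g‖ (2γq)^{1/(1−q)} |F_g(φ)|^{1/(q−1)}`, one has
`‖g − λ φ‖ ≤ ‖g‖ (1 − ((q−1)/q)(2γq)^{1/(1−q)} |F_g(φ)|^{q/(q−1)})`. -/
theorem rpga_banach_step_reduction {X : Type*} [NormedAddCommGroup X]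
    [NormedSpace ℝ X] [CompleteSpace X]
    (γ q : ℝ) (hq1 : 1 < q) (hq2 : q ≤ 2) (hγ : 0 < γ)
    (hρ : ∀ u : ℝ, 0 < u → modulusOfSmoothness X u ≤ γ * u ^ q)
    (g : X) (hg : g ≠ 0)
    (Fg : X →L[ℝ] ℝ) (hFg_norm : ‖Fg‖ = 1) (hFg : Fg g = ‖g‖)
    (φ : X) (hφ : ‖φ‖ = 1) (hFgφ : Fg φ ≠ 0)
    (lam : ℝ)
    (hlam : lam = Real.sign (Fg φ) * ‖g‖ * (2 * γ * q) ^ ((1 : ℝ) / (1 - q)) *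
      |Fg φ| ^ ((1 : ℝ) / (q - 1))) :
    ‖g - lam • φ‖ ≤
      ‖g‖ * (1 - (q - 1) / q * (2 * γ * q) ^ ((1 : ℝ) / (1 - q)) *
        |Fg φ| ^ (q / (q - 1))) :=
  rpga_banach_step_reduction_general γ q hq1 hγ hρ g hg Fg hFg_norm hFg φ hφ lam hlam
end
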